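/- For all integers N ≥ 0, ∑_{n=0}^{N} (N choose n) 2^n ∑_{k=0}^{n} S(n,k) · k! · (-1)^k/(k+1) = (2 - 2^N) B_N, where S(n,k) are the Stirling numbers of the second kind and B_N the N-th Bernoulli number. -/

import Mathlib

open Finset

/-- Ordinary Stirling numbers of the second kind (as rationals). -/
def stirling2 : ℕ → ℕ → ℚ
  | 0, 0 => 1
  | 0, _ + 1 => 0
  | _ + 1, 0 => 0
  | n + 1, k + 1 => stirling2 n k + (k + 1 : ℚ) * stirling2 n (k + 1)

lemma stirling2_eq_zero_of_lt : ∀ n k : ℕ, n < k → stirling2 n k = 0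
  | 0, _ + 1, _ => rfl
  | n + 1, k + 1, h => by
    rw [stirling2, stirling2_eq_zero_of_lt n k (by omega),
      stirling2_eq_zero_of_lt n (k + 1) (by omega)]
    ring

lemma stirling2_one : ∀ n : ℕ, stirling2 (n + 1) 1 = 1
  | 0 => by norm_num [stirling2]
  | n + 1 => by
    rw [stirling2, stirling2_one n]
    norm_num [stirling2]

lemma sum_choose_stirling2 : ∀ n k : ℕ,
    ∑ m ∈ range (n + 1), (n.choose m : ℚ) * stirling2 m k = stirling2 (n + 1) (k + 1)
  | 0, 0 => by norm_num [stirling2]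
  | 0, k + 1 => by norm_num [stirling2]
  | n + 1, 0 => by
    rw [Finset.sum_range_succ', stirling2_one]
    simp only [stirling2]
    norm_num [stirling2_eq_zero_of_lt]
  | n + 1, k + 1 => by
    have hT : ∑ i ∈ range (n + 1), (n.choose (i + 1) : ℚ) * stirling2 (i + 1) (k + 1)
        = stirling2 (n + 1) (k + 2) := by
      have h2 := Finset.sum_range_succ' (fun m => (n.choose m : ℚ) * stirling2 m (k + 1)) (n + 1)
      rw [Finset.sum_range_succ, sum_choose_stirling2 n (k + 1)] at h2
      simp only [Nat.choose_succ_self, Nat.cast_zero, zero_mul, add_zero, Nat.choose_zero_right,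
        Nat.cast_one, one_mul] at h2
      have h0 : stirling2 0 (k + 1) = 0 := rfl
      rw [h0, add_zero] at h2
      linarith
    have hsplit : ∀ i : ℕ, ((n + 1).choose (i + 1) : ℚ) * stirling2 (i + 1) (k + 1)
        = (n.choose i : ℚ) * stirling2 i k + (k + 1 : ℚ) * ((n.choose i : ℚ) * stirling2 i (k + 1))
          + (n.choose (i + 1) : ℚ) * stirling2 (i + 1) (k + 1) := by
      intro i
      rw [Nat.choose_succ_succ, Nat.cast_add,
        show stirling2 (i + 1) (k + 1) = stirling2 i k + (k + 1 : ℚ) * stirling2 i (k + 1) from rfl]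
      ring
    rw [Finset.sum_range_succ']
    simp only [hsplit]
    rw [Finset.sum_add_distrib, Finset.sum_add_distrib, ← Finset.mul_sum,
      sum_choose_stirling2 n k, sum_choose_stirling2 n (k + 1), hT]
    have h0 : stirling2 0 (k + 1) = 0 := rfl
    rw [h0,
      show stirling2 (n + 2) (k + 2)
        = stirling2 (n + 1) (k + 1) + ((k + 1 : ℕ) + 1 : ℚ) * stirling2 (n + 1) (k + 2) from rfl]
    push_cast
    ring

lemma sum_fact_stirling (n : ℕ) :
    ∑ k ∈ range (n + 1), (-1 : ℚ) ^ k * k.factorial * stirling2 (n + 1) (k + 1)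
      = if n = 0 then 1 else 0 := by
  have key : ∀ k : ℕ, (-1 : ℚ) ^ k * k.factorial * stirling2 (n + 1) (k + 1)
      = (fun k : ℕ => (-1 : ℚ) ^ k * k.factorial * stirling2 n k) k
        - (fun k : ℕ => (-1 : ℚ) ^ k * k.factorial * stirling2 n k) (k + 1) := by
    intro k
    simp only
    rw [show stirling2 (n + 1) (k + 1) = stirling2 n k + (k + 1 : ℚ) * stirling2 n (k + 1) from rfl,
      Nat.factorial_succ]
    push_cast
    ring
  rw [Finset.sum_congr rfl fun k _ => key k,
    Finset.sum_range_sub' (fun k : ℕ => (-1 : ℚ) ^ k * k.factorial * stirling2 n k),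
    stirling2_eq_zero_of_lt n (n + 1) (by omega)]
  cases n with
  | zero => norm_num [stirling2]
  | succ m =>
    rw [if_neg (by omega)]
    show (-1 : ℚ) ^ 0 * _ * stirling2 (m + 1) 0 - _ = 0
    rw [show stirling2 (m + 1) 0 = 0 from rfl]
    ring

def bb (m : ℕ) : ℚ :=
  ∑ k ∈ range (m + 1), stirling2 m k * k.factorial * (-1) ^ k / (k + 1)

lemma sum_choose_bb (n : ℕ) :
    ∑ m ∈ range n, (n.choose m : ℚ) * bb m = if n = 1 then 1 else 0 := by
  cases n with
  | zero => simp
  | succ n =>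
    have hext : ∀ m ∈ range (n + 1), (((n + 1 : ℕ)).choose m : ℚ) * bb m
        = ∑ k ∈ range (n + 1), ((n + 1 : ℕ).choose m : ℚ)
            * (stirling2 m k * k.factorial * (-1) ^ k / (k + 1)) := by
      intro m hm
      rw [bb, Finset.mul_sum]
      apply Finset.sum_subset
      · exact Finset.range_subset_range.2 (by simp at hm; omega)
      · intro k _ hk
        simp only [Finset.mem_range, not_lt] at hk
        rw [stirling2_eq_zero_of_lt m k (by omega)]
        ring
    rw [Finset.sum_congr rfl hext, Finset.sum_comm]
    have hinner : ∀ k ∈ range (n + 1),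
        ∑ m ∈ range (n + 1), ((n + 1 : ℕ).choose m : ℚ)
            * (stirling2 m k * k.factorial * (-1) ^ k / (k + 1))
          = (-1 : ℚ) ^ k * k.factorial * stirling2 (n + 1) (k + 1) := by
      intro k _
      have hsum : ∑ m ∈ range (n + 1), ((n + 1 : ℕ).choose m : ℚ) * stirling2 m k
          = (k + 1 : ℚ) * stirling2 (n + 1) (k + 1) := by
        have h := sum_choose_stirling2 (n + 1) k
        rw [Finset.sum_range_succ, Nat.choose_self] at h
        rw [show stirling2 (n + 2) (k + 1) = stirling2 (n + 1) k
            + (k + 1 : ℚ) * stirling2 (n + 1) (k + 1) from rfl] at h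
        push_cast at h ⊢
        linarith
      have : ∑ m ∈ range (n + 1), ((n + 1 : ℕ).choose m : ℚ)
            * (stirling2 m k * k.factorial * (-1) ^ k / (k + 1))
          = (∑ m ∈ range (n + 1), ((n + 1 : ℕ).choose m : ℚ) * stirling2 m k)
            * (k.factorial * (-1) ^ k / (k + 1)) := by
        rw [Finset.sum_mul]
        exact Finset.sum_congr rfl fun m _ => by ring
      rw [this, hsum]
      have hk1 : (k : ℚ) + 1 ≠ 0 := by positivity
      field_simp
    rw [Finset.sum_congr rfl hinner, sum_fact_stirling]
    simp

lemma bb_eq_bernoulli (n : ℕ) : bb n = bernoulli n := by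
  induction n using Nat.strong_induction_on with
  | _ n ih =>
    cases n with
    | zero => norm_num [bb, stirling2, bernoulli_zero]
    | succ m =>
      have h1 := sum_choose_bb (m + 2)
      have h2 := sum_bernoulli (m + 2)
      rw [Finset.sum_range_succ] at h1 h2
      have heq : ∑ k ∈ range (m + 1), ((m + 2 : ℕ).choose k : ℚ) * bb k
          = ∑ k ∈ range (m + 1), ((m + 2 : ℕ).choose k : ℚ) * bernoulli k := by
        refine Finset.sum_congr rfl fun k hk => ?_
        rw [ih k (by simp at hk; omega)]
      rw [heq] at h1
      have hc : ((m + 2 : ℕ).choose (m + 1) : ℚ) ≠ 0 :=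
        Nat.cast_ne_zero.2 (Nat.choose_pos (by omega)).ne'
      have h3 : ((m + 2 : ℕ).choose (m + 1) : ℚ) * bb (m + 1)
          = ((m + 2 : ℕ).choose (m + 1) : ℚ) * bernoulli (m + 1) := by linarith
      exact mul_left_cancel₀ hc h3

open PowerSeries in
lemma key_ps : rescale (2 : ℚ) (bernoulliPowerSeries ℚ) * exp ℚ
    = (2 : ℚ) • bernoulliPowerSeries ℚ - rescale (2 : ℚ) (bernoulliPowerSeries ℚ) := by
  have hexp : exp ℚ - 1 ≠ 0 := by
    intro h
    have := congrArg (coeff 1) h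
    simp [coeff_exp] at this
  apply mul_right_cancel₀ hexp
  have hBX : bernoulliPowerSeries ℚ * (exp ℚ - 1) = X :=
    bernoulliPowerSeries_mul_exp_sub_one ℚ
  have h1 : exp ℚ * exp ℚ = rescale (2 : ℚ) (exp ℚ) := by
    have h := exp_mul_exp_eq_exp_add (1 : ℚ) 1
    rw [rescale_one] at h
    norm_num at h
    exact h
  have h2 : rescale (2 : ℚ) (bernoulliPowerSeries ℚ) * rescale (2 : ℚ) (exp ℚ)
      - rescale (2 : ℚ) (bernoulliPowerSeries ℚ) = (2 : ℚ) • X := by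
    have : rescale (2 : ℚ) (bernoulliPowerSeries ℚ) * rescale (2 : ℚ) (exp ℚ)
        - rescale (2 : ℚ) (bernoulliPowerSeries ℚ)
        = rescale (2 : ℚ) (bernoulliPowerSeries ℚ * (exp ℚ - 1)) := by
      rw [map_mul, map_sub, map_one, mul_sub, mul_one]
    rw [this, hBX, rescale_X, smul_eq_C_mul]
  have hs : ((2 : ℚ) • bernoulliPowerSeries ℚ) = C 2 * bernoulliPowerSeries ℚ :=
    smul_eq_C_mul _ _
  have hsX : ((2 : ℚ) • (X : ℚ⟦X⟧)) = C 2 * X := smul_eq_C_mul _ _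
  rw [hs]
  rw [hsX] at h2
  linear_combination (rescale (2 : ℚ) (bernoulliPowerSeries ℚ)) * h1 + h2
    - (C 2) * hBX

lemma sum_choose_two_pow_bernoulli (N : ℕ) :
    ∑ n ∈ range (N + 1), (N.choose n : ℚ) * 2 ^ n * bernoulli n
      = (2 - (2 : ℚ) ^ N) * bernoulli N := by
  have hc := congrArg (PowerSeries.coeff N) key_ps
  simp only [PowerSeries.coeff_mul, map_sub, map_smul, PowerSeries.coeff_rescale,
    bernoulliPowerSeries, PowerSeries.coeff_mk, PowerSeries.coeff_exp,
    Nat.sum_antidiagonal_eq_sum_range_succ_mk, Algebra.algebraMap_self, RingHom.id_apply,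
    smul_eq_mul] at hc
  have hfact : ∀ m : ℕ, (m.factorial : ℚ) ≠ 0 := fun m => Nat.cast_ne_zero.2 m.factorial_ne_zero
  calc ∑ n ∈ range (N + 1), (N.choose n : ℚ) * 2 ^ n * bernoulli n
      = ∑ n ∈ range (N + 1),
          (2 ^ n * (bernoulli n / n.factorial) * (1 / (N - n).factorial)) * N.factorial := by
        refine Finset.sum_congr rfl fun n hn => ?_
        have h := Nat.choose_mul_factorial_mul_factorial (Finset.mem_range_succ_iff.mp hn)
        have h' : ((N.choose n : ℕ) : ℚ) * n.factorial * (N - n).factorial = N.factorial := by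
          exact_mod_cast congrArg (Nat.cast : ℕ → ℚ) h
        field_simp
        linear_combination bernoulli n * h'
    _ = (2 * (bernoulli N / N.factorial) - 2 ^ N * (bernoulli N / N.factorial)) * N.factorial := by
        rw [← Finset.sum_mul, hc]
    _ = (2 - (2 : ℚ) ^ N) * bernoulli N := by
        field_simp

theorem stmt_5 (N : ℕ) :
    ∑ n ∈ Finset.range (N + 1), (N.choose n : ℚ) * 2 ^ n *
        ∑ k ∈ Finset.range (n + 1), stirling2 n k * (Nat.factorial k : ℚ) * (-1) ^ k / (k + 1) =
      (2 - (2 : ℚ) ^ N) * bernoulli N := by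
  calc ∑ n ∈ Finset.range (N + 1), (N.choose n : ℚ) * 2 ^ n *
        ∑ k ∈ Finset.range (n + 1), stirling2 n k * (Nat.factorial k : ℚ) * (-1) ^ k / (k + 1)
      = ∑ n ∈ range (N + 1), (N.choose n : ℚ) * 2 ^ n * bernoulli n := by
        refine Finset.sum_congr rfl fun n _ => ?_
        rw [show (∑ k ∈ Finset.range (n + 1),
            stirling2 n k * (Nat.factorial k : ℚ) * (-1) ^ k / (k + 1)) = bb n from rfl,
          bb_eq_bernoulli]
    _ = (2 - (2 : ℚ) ^ N) * bernoulli N := sum_choose_two_pow_bernoulli N
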